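/- Let g be a finite-dimensional real Lie algebra endowed with an Abelian linear D-complex structure K. Then K is linear C∞-pure at the 2nd stage, i.e., H^{2+}_K(g;ℝ) ∩ H^{2−}_K(g;ℝ) = {0}. -/

import Mathlib

open scoped BigOperators

noncomputable section ChevalleyEilenberg

variable (g : Type*) [LieRing g] [LieAlgebra ℝ g]

/-- The Chevalley–Eilenberg differential of an alternating `k`-form on a real Lie
algebra, as a function on `(k+1)`-tuples:
`(dα)(x_0,…,x_k) = Σ_{i<j} (−1)^{i+j} α([x_i,x_j], x_0,…,x̂_i,…,x̂_j,…,x_k)`. -/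
def ceD : {k : ℕ} → AlternatingMap ℝ g ℝ (Fin k) → ((Fin (k + 1) → g) → ℝ)
  | 0, _ => 0
  | (k + 1), α => fun x =>
      ∑ i : Fin (k + 2), ∑ j : Fin (k + 2),
        if hij : (i : ℕ) < (j : ℕ) then
          (-1 : ℝ) ^ ((i : ℕ) + (j : ℕ)) *
            α (fun m : Fin (k + 1) =>
                if hm : (m : ℕ) = 0 then ⁅x i, x j⁆
                else
                  x (j.succAbove
                      ((⟨(i : ℕ), by omega⟩ : Fin (k + 1)).succAbove
                        (⟨(m : ℕ) - 1, by omega⟩ : Fin k))))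
        else 0

theorem ceD_zero {k : ℕ} : ceD g (0 : AlternatingMap ℝ g ℝ (Fin k)) = 0 := by
  cases k with
  | zero => rfl
  | succ k => funext x; simp [ceD]

theorem ceD_add {k : ℕ} (α β : AlternatingMap ℝ g ℝ (Fin k)) :
    ceD g (α + β) = ceD g α + ceD g β := by
  cases k with
  | zero => funext x; simp [ceD]
  | succ k =>
    funext x
    simp only [ceD, Pi.add_apply, AlternatingMap.add_apply]
    rw [← Finset.sum_add_distrib]
    refine Finset.sum_congr rfl fun i _ => ?_
    rw [← Finset.sum_add_distrib]
    refine Finset.sum_congr rfl fun j _ => ?_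
    split
    · ring
    · ring

theorem ceD_smul {k : ℕ} (c : ℝ) (α : AlternatingMap ℝ g ℝ (Fin k)) :
    ceD g (c • α) = c • ceD g α := by
  cases k with
  | zero => funext x; simp [ceD]
  | succ k =>
    funext x
    simp only [ceD, Pi.smul_apply, AlternatingMap.smul_apply, smul_eq_mul,
      Finset.mul_sum]
    refine Finset.sum_congr rfl fun i _ => ?_
    refine Finset.sum_congr rfl fun j _ => ?_
    split
    · ring
    · ring

/-- The space of `d`-closed `k`-forms. -/
def Zsub (k : ℕ) : Submodule ℝ (AlternatingMap ℝ g ℝ (Fin k)) where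
  carrier := {α | ceD g α = 0}
  add_mem' := by
    intro a b ha hb
    simp only [Set.mem_setOf_eq] at *
    rw [ceD_add, ha, hb, add_zero]
  zero_mem' := by
    simpa only [Set.mem_setOf_eq] using ceD_zero g
  smul_mem' := by
    intro c a ha
    simp only [Set.mem_setOf_eq] at *
    rw [ceD_smul, ha, smul_zero]

/-- The space of `d`-exact `k`-forms. -/
def Bsub : (k : ℕ) → Submodule ℝ (AlternatingMap ℝ g ℝ (Fin k))
  | 0 => ⊥
  | (k + 1) =>
    { carrier := {α | ∃ β : AlternatingMap ℝ g ℝ (Fin k), ceD g β = ⇑α}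
      add_mem' := by
        rintro a b ⟨βa, hβa⟩ ⟨βb, hβb⟩
        exact ⟨βa + βb, by rw [ceD_add, hβa, hβb]; ext x; simp⟩
      zero_mem' := ⟨0, by rw [ceD_zero]; ext x; simp⟩
      smul_mem' := by
        rintro c a ⟨β, hβ⟩
        exact ⟨c • β, by rw [ceD_smul, hβ]; rfl⟩ }

instance instAddCommGroupZsub (k : ℕ) : AddCommGroup ↥(Zsub g k) := inferInstance

/-- The `k`-th Lie algebra cohomology `H^k(g;ℝ) = ker d / im d`. -/
abbrev Hcoh (k : ℕ) : Type _ :=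
  ↥(Zsub g k) ⧸ (Bsub g k).comap (Zsub g k).subtype

/-- The cohomology class of a `d`-closed `k`-form. -/
def cls {k : ℕ} (α : AlternatingMap ℝ g ℝ (Fin k)) (hα : ceD g α = 0) : Hcoh g k :=
  Submodule.Quotient.mk (⟨α, hα⟩ : Zsub g k)

/-- The subgroup `H^{k+}_K(g;ℝ)` of classes admitting a `d`-closed `K`-invariant
representative.  (The set of such classes is a linear subspace, so taking its span
does not enlarge it.) -/
def Hplus (K : g →ₗ[ℝ] g) (k : ℕ) : Submodule ℝ (Hcoh g k) :=
  Submodule.span ℝ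
    {c | ∃ (α : AlternatingMap ℝ g ℝ (Fin k)) (hα : ceD g α = 0),
        α.compLinearMap K = α ∧ c = cls g α hα}

/-- The subgroup `H^{k−}_K(g;ℝ)` of classes admitting a `d`-closed
`K`-anti-invariant representative. -/
def Hminus (K : g →ₗ[ℝ] g) (k : ℕ) : Submodule ℝ (Hcoh g k) :=
  Submodule.span ℝ
    {c | ∃ (α : AlternatingMap ℝ g ℝ (Fin k)) (hα : ceD g α = 0),
        α.compLinearMap K = -α ∧ c = cls g α hα}

/-- The wedge product of `k` linear functionals, as an alternating `k`-form. -/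
def wedge {k : ℕ} (fs : Fin k → (g →ₗ[ℝ] ℝ)) :
    AlternatingMap ℝ g ℝ (Fin k) :=
  MultilinearMap.alternatization
    ((MultilinearMap.mkPiAlgebra ℝ (Fin k) ℝ).compLinearMap fs)

end ChevalleyEilenberg

/-! If `K` reverses the sign of brackets, which is what abelianness of `g⁺` and `g⁻` gives,
then `dγ` is `K`-anti-invariant for every 1-form `γ`, since `dγ(x, y) = -γ ⁅x, y⁆`. So if a
class has a `K`-invariant representative `α` and a `K`-anti-invariant one `β`, then
`α = β + dγ` is both `K`-invariant and `K`-anti-invariant, hence zero. -/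

theorem AlternatingMap.apply_vecCons_neg {R M N : Type*} [CommRing R] [AddCommGroup M]
    [Module R M] [AddCommGroup N] [Module R N] (γ : AlternatingMap R M N (Fin 1)) (z : M) :
    γ ![-z] = -γ ![z] := by
  simpa only [MultilinearMap.toLinearMap_apply, AlternatingMap.coe_multilinearMap,
    Matrix.vecCons, Fin.update_cons_zero] using (γ.toMultilinearMap.toLinearMap ![z] 0).map_neg z

/-- When `L = p ⊕ q` with `p`, `q` abelian and `K = ±1` on `p`, `q`, the cross terms of
`⁅K x, K y⁆` and `⁅x, y⁆` have opposite signs and the others vanish. -/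
theorem lie_apply_apply_eq_neg_lie {R L : Type*} [CommRing R] [LieRing L] [LieAlgebra R L]
    {p q : LieSubalgebra R L} (hpq : Codisjoint p.toSubmodule q.toSubmodule)
    (habp : ∀ x ∈ p, ∀ y ∈ p, ⁅x, y⁆ = (0 : L)) (habq : ∀ x ∈ q, ∀ y ∈ q, ⁅x, y⁆ = (0 : L))
    {K : L →ₗ[R] L} (hKp : ∀ x ∈ p, K x = x) (hKq : ∀ x ∈ q, K x = -x) (x y : L) :
    ⁅K x, K y⁆ = -⁅x, y⁆ := by
  obtain ⟨a, ha, b, hb, rfl⟩ := Submodule.mem_sup.1 (hpq.eq_top ▸ Submodule.mem_top (x := x))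
  obtain ⟨c, hc, d, hd, rfl⟩ := Submodule.mem_sup.1 (hpq.eq_top ▸ Submodule.mem_top (x := y))
  simp only [map_add, hKp a ha, hKq b hb, hKp c hc, hKq d hd, add_lie, lie_add, neg_lie,
    lie_neg, habp a ha c hc, habq b hb d hd]
  abel

section Purity

variable {g : Type*} [LieRing g] [LieAlgebra ℝ g]

theorem cls_zero {k : ℕ} (h : ceD g (0 : AlternatingMap ℝ g ℝ (Fin k)) = 0) :
    cls g 0 h = 0 :=
  (Submodule.Quotient.mk_eq_zero _).2 (Submodule.zero_mem _)

theorem cls_add {k : ℕ} {α β : AlternatingMap ℝ g ℝ (Fin k)}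
    (hα : ceD g α = 0) (hβ : ceD g β = 0) (h : ceD g (α + β) = 0) :
    cls g (α + β) h = cls g α hα + cls g β hβ :=
  rfl

theorem cls_smul {k : ℕ} (c : ℝ) {α : AlternatingMap ℝ g ℝ (Fin k)}
    (hα : ceD g α = 0) (h : ceD g (c • α) = 0) :
    cls g (c • α) h = c • cls g α hα :=
  rfl

theorem exists_ceD_eq_sub_of_cls_eq {k : ℕ} {α β : AlternatingMap ℝ g ℝ (Fin (k + 1))}
    {hα : ceD g α = 0} {hβ : ceD g β = 0} (h : cls g α hα = cls g β hβ) :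
    ∃ γ : AlternatingMap ℝ g ℝ (Fin k), ceD g γ = ⇑(α - β) :=
  (Submodule.Quotient.eq _).1 h

variable (g) in
/-- Unlike `Hplus` and `Hminus`, this is defined without taking a span, so its elements
come with a representative. -/
def eigenformClasses (K : g →ₗ[ℝ] g) (s : ℝ) (k : ℕ) : Submodule ℝ (Hcoh g k) where
  carrier := {c | ∃ (α : AlternatingMap ℝ g ℝ (Fin k)) (hα : ceD g α = 0),
      α.compLinearMap K = s • α ∧ c = cls g α hα}
  zero_mem' := ⟨0, ceD_zero g, by simp, (cls_zero _).symm⟩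
  add_mem' := by
    rintro _ _ ⟨α, hα, hKα, rfl⟩ ⟨β, hβ, hKβ, rfl⟩
    refine ⟨α + β, by rw [ceD_add, hα, hβ, add_zero], ?_, cls_add hα hβ _⟩
    rw [AlternatingMap.add_compLinearMap, hKα, hKβ, smul_add]
  smul_mem' := by
    rintro c _ ⟨α, hα, hKα, rfl⟩
    refine ⟨c • α, by rw [ceD_smul, hα, smul_zero], ?_, cls_smul c hα _⟩
    ext v
    simp only [AlternatingMap.compLinearMap_apply, AlternatingMap.smul_apply]
    rw [← AlternatingMap.compLinearMap_apply, hKα, AlternatingMap.smul_apply, smul_comm]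

theorem Hplus_le_eigenformClasses (K : g →ₗ[ℝ] g) (k : ℕ) :
    Hplus g K k ≤ eigenformClasses g K 1 k :=
  Submodule.span_le.2 fun _ ⟨α, hα, hKα, hc⟩ => ⟨α, hα, hKα.trans (one_smul ℝ α).symm, hc⟩

theorem Hminus_le_eigenformClasses (K : g →ₗ[ℝ] g) (k : ℕ) :
    Hminus g K k ≤ eigenformClasses g K (-1) k :=
  Submodule.span_le.2 fun _ ⟨α, hα, hKα, hc⟩ => ⟨α, hα, hKα.trans (neg_one_smul ℝ α).symm, hc⟩

theorem ceD_one_apply (γ : AlternatingMap ℝ g ℝ (Fin 1)) (x : Fin 2 → g) :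
    ceD g γ x = -γ ![⁅x 0, x 1⁆] := by
  have hconst : (fun _ : Fin 1 => ⁅x 0, x 1⁆) = ![⁅x 0, x 1⁆] := by
    ext m; simp [Fin.fin_one_eq_zero m]
  simp [ceD, Fin.sum_univ_two, hconst]

theorem ceD_one_comp_eq_neg {K : g →ₗ[ℝ] g} (hK : ∀ x y, ⁅K x, K y⁆ = -⁅x, y⁆)
    (γ : AlternatingMap ℝ g ℝ (Fin 1)) (x : Fin 2 → g) :
    ceD g γ (K ∘ x) = -ceD g γ x := by
  simp only [ceD_one_apply, Function.comp_apply, hK, AlternatingMap.apply_vecCons_neg]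

theorem eq_zero_of_compLinearMap_eq_self_of_ceD_eq_sub {K : g →ₗ[ℝ] g}
    (hK : ∀ x y, ⁅K x, K y⁆ = -⁅x, y⁆) {α β : AlternatingMap ℝ g ℝ (Fin 2)}
    (hKα : α.compLinearMap K = α) (hKβ : β.compLinearMap K = -β)
    {γ : AlternatingMap ℝ g ℝ (Fin 1)} (hγ : ceD g γ = ⇑(α - β)) : α = 0 := by
  ext v
  have hα : α (K ∘ v) = α v := DFunLike.congr_fun hKα v
  have hβ : β (K ∘ v) = -β v := DFunLike.congr_fun hKβ v
  have hsub (w : Fin 2 → g) : α w - β w = ceD g γ w := by rw [hγ]; rfl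
  have hdγ := ceD_one_comp_eq_neg hK γ v
  rw [← hsub, ← hsub, hα, hβ] at hdγ
  rw [AlternatingMap.zero_apply]
  linarith

end Purity

theorem abelian_Dcomplex_linear_pure_at_two_general
    (g : Type*) [LieRing g] [LieAlgebra ℝ g]
    (p q : LieSubalgebra ℝ g)
    (hcompl : IsCompl p.toSubmodule q.toSubmodule)
    (habp : ∀ x ∈ p, ∀ y ∈ p, ⁅x, y⁆ = (0 : g))
    (habq : ∀ x ∈ q, ∀ y ∈ q, ⁅x, y⁆ = (0 : g))
    (K : g →ₗ[ℝ] g)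
    (hKp : ∀ x ∈ p, K x = x) (hKq : ∀ x ∈ q, K x = -x) :
    Hplus g K 2 ⊓ Hminus g K 2 = ⊥ := by
  have hK := lie_apply_apply_eq_neg_lie hcompl.codisjoint habp habq hKp hKq
  rw [eq_bot_iff]
  rintro _ ⟨hplus, hminus⟩
  obtain ⟨α, hα, hKα, rfl⟩ := Hplus_le_eigenformClasses K 2 hplus
  obtain ⟨β, hβ, hKβ, hαβ⟩ := Hminus_le_eigenformClasses K 2 hminus
  obtain ⟨γ, hγ⟩ := exists_ceD_eq_sub_of_cls_eq hαβ
  obtain rfl := eq_zero_of_compLinearMap_eq_self_of_ceD_eq_sub hK (hKα.trans (one_smul ℝ α))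
    (hKβ.trans (neg_one_smul ℝ β)) hγ
  exact cls_zero hα

/-- A finite-dimensional real Lie algebra with an Abelian linear
D-complex structure is linear C∞-pure at the 2nd stage. -/
theorem abelian_Dcomplex_linear_pure_at_two
    (g : Type*) [LieRing g] [LieAlgebra ℝ g] [FiniteDimensional ℝ g]
    (n : ℕ) (hg : Module.finrank ℝ g = 2 * n)
    (p q : LieSubalgebra ℝ g)
    (hcompl : IsCompl p.toSubmodule q.toSubmodule)
    (hp : Module.finrank ℝ p.toSubmodule = n)
    (hq : Module.finrank ℝ q.toSubmodule = n)
    (habp : ∀ x ∈ p, ∀ y ∈ p, ⁅x, y⁆ = (0 : g))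
    (habq : ∀ x ∈ q, ∀ y ∈ q, ⁅x, y⁆ = (0 : g))
    (K : g →ₗ[ℝ] g)
    (hKp : ∀ x ∈ p, K x = x) (hKq : ∀ x ∈ q, K x = -x) :
    Hplus g K 2 ⊓ Hminus g K 2 = ⊥ :=
  abelian_Dcomplex_linear_pure_at_two_general g p q hcompl habp habq K hKp hKq
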